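/- For 3 ≤ r ≤ 8, the group of ℤ-linear automorphisms of Λ_r that preserve the bilinear form and fix K_r acts transitively on the set of exceptional classes of Λ_r. -/

import Mathlib

/-- The intersection pairing on the Picard lattice `Λ_r = ℤ^(r+1)`:
`⟨x, y⟩ = x₀y₀ − x₁y₁ − ⋯ − x_r y_r`. -/
def pair {r : ℕ} (x y : Fin (r + 1) → ℤ) : ℤ :=
  x 0 * y 0 - ∑ i : Fin r, x i.succ * y i.succ

/-- The canonical class `K_r = (−3, 1, …, 1)`. -/
def Kc (r : ℕ) : Fin (r + 1) → ℤ := fun i => if i = 0 then -3 else 1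

/-- Exceptional classes (classes of `(−1)`-curves). -/
def Exceptional {r : ℕ} (E : Fin (r + 1) → ℤ) : Prop :=
  pair E E = -1 ∧ pair (Kc r) E = -1

/-- Nef classes: nonnegative pairing with every exceptional class. -/
def Nef {r : ℕ} (D : Fin (r + 1) → ℤ) : Prop :=
  ∀ E : Fin (r + 1) → ℤ, Exceptional E → 0 ≤ pair D E

/-- Conics: nef classes `Q` with `⟨Q,Q⟩ = 0` and `⟨K,Q⟩ = −2`. -/
def Conic {r : ℕ} (Q : Fin (r + 1) → ℤ) : Prop :=
  Nef Q ∧ pair Q Q = 0 ∧ pair (Kc r) Q = -2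

/-- Twisted cubics: nef classes `C` with `⟨C,C⟩ = 1` and `⟨K,C⟩ = −3`. -/
def TwistedCubic {r : ℕ} (C : Fin (r + 1) → ℤ) : Prop :=
  Nef C ∧ pair C C = 1 ∧ pair (Kc r) C = -3

/-!
Reflections `x ↦ x + ⟨α, x⟩ α` in roots `α` (`⟨α, α⟩ = -2`, `⟨K, α⟩ = 0`) are isometries fixing
`K`. For an exceptional class `E = (a; b₁, …, b_r)` with `a > 0`, Cauchy–Schwarz and `r ≤ 8` force
every `bᵢ ≤ 0` and then Noether's inequality `a + bᵢ + bⱼ + bₖ < 0` for the three smallest `bᵢ`,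
so reflecting in the Cremona root `h - eᵢ - eⱼ - eₖ` strictly lowers `a`. Since `a ≥ 0` on
exceptional classes, this descent ends at `a = 0`, where `E = eⱼ`; the `eⱼ` are permuted by the
reflections in `eᵢ - eⱼ`.
-/

open Module MulAction

lemma LinearMap.BilinForm.isOrthogonal_reflection_neg {R M : Type*} [CommRing R]
    [AddCommGroup M] [Module R M] {B : LinearMap.BilinForm R M} (hB : B.IsSymm) {α : M} (h : (-B α) α = 2) : B.IsOrthogonal (reflection h) := by
  intro x y
  have hα : B α α = -2 := by rw [LinearMap.neg_apply] at h; linear_combination -h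
  simp only [reflection_apply, LinearMap.neg_apply, map_sub, map_smul, LinearMap.sub_apply,
    LinearMap.smul_apply, smul_eq_mul, hα, hB.eq x α]
  ring

variable {r : ℕ}

lemma pair_comm (x y : Fin (r + 1) → ℤ) : pair x y = pair y x := by
  simp only [pair, mul_comm]

def pairing (r : ℕ) : LinearMap.BilinForm ℤ (Fin (r + 1) → ℤ) :=
  Matrix.toBilin' (Matrix.diagonal (Fin.cons 1 fun _ => -1))

@[simp]
lemma pairing_apply (x y : Fin (r + 1) → ℤ) : pairing r x y = pair x y := by
  simp [pairing, Matrix.toBilin'_apply', dotProduct, Matrix.mulVec_diagonal, Fin.sum_univ_succ,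
    pair, Finset.sum_neg_distrib, sub_eq_add_neg]

lemma pairing_isSymm : (pairing r).IsSymm := ⟨fun x y => by simp only [pairing_apply, pair_comm]⟩

def canonicalIsometries (r : ℕ) : Subgroup ((Fin (r + 1) → ℤ) ≃ₗ[ℤ] (Fin (r + 1) → ℤ)) where
  carrier := {g | (pairing r).IsOrthogonal g ∧ g (Kc r) = Kc r}
  mul_mem' {g h} hg hh := ⟨fun x y => (hg.1 _ _).trans (hh.1 x y), by simp [hh.2, hg.2]⟩
  one_mem' := ⟨fun _ _ => rfl, rfl⟩
  inv_mem' {g} hg := ⟨fun x y => by simpa using (hg.1 (g.symm x) (g.symm y)).symm,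
    by simpa using (congrArg g.symm hg.2).symm⟩

lemma canonicalIsometries.smul_def (g : canonicalIsometries r) (x : Fin (r + 1) → ℤ) :
    g • x = (g : (Fin (r + 1) → ℤ) ≃ₗ[ℤ] (Fin (r + 1) → ℤ)) x := rfl

lemma Exceptional.smul {E : Fin (r + 1) → ℤ} (hE : Exceptional E) (g : canonicalIsometries r) :
    Exceptional (g • E) := by
  obtain ⟨g, horth, hK⟩ := g
  have hpair (x y) : pair (g x) (g y) = pair x y := by simpa using horth x y
  refine ⟨(hpair E E).trans hE.1, ?_⟩
  have := (hpair (Kc r) E).trans hE.2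
  rwa [hK] at this

lemma add_pair_smul_mem_orbit {α : Fin (r + 1) → ℤ} (hα : pair α α = -2)
    (hK : pair α (Kc r) = 0) (x : Fin (r + 1) → ℤ) :
    x + pair α x • α ∈ orbit (canonicalIsometries r) x := by
  have h : (-pairing r α) α = 2 := by simp [hα]
  refine ⟨⟨reflection h, (pairing r).isOrthogonal_reflection_neg pairing_isSymm h, ?_⟩, ?_⟩
  · simp [reflection_apply, hK]
  · simp [canonicalIsometries.smul_def, reflection_apply, sub_eq_add_neg]

lemma pair_sub_left (x y z : Fin (r + 1) → ℤ) : pair (x - y) z = pair x z - pair y z := by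
  simp only [← pairing_apply, map_sub, LinearMap.sub_apply]

lemma pair_single_zero_left (x : Fin (r + 1) → ℤ) : pair (Pi.single 0 1) x = x 0 := by
  simp [pair, Fin.succ_ne_zero]

lemma pair_single_succ_left (i : Fin r) (x : Fin (r + 1) → ℤ) :
    pair (Pi.single i.succ 1) x = -x i.succ := by
  simp [pair, Pi.single_apply, (Fin.succ_ne_zero i).symm, Fin.succ_inj]

section Roots

variable {i j k : Fin r}

lemma pair_transpositionRoot (x : Fin (r + 1) → ℤ) :
    pair (Pi.single i.succ 1 - Pi.single j.succ 1) x = x j.succ - x i.succ := by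
  rw [pair_sub_left, pair_single_succ_left, pair_single_succ_left]; ring

lemma pair_cremonaRoot (x : Fin (r + 1) → ℤ) :
    pair (Pi.single 0 1 - Pi.single i.succ 1 - Pi.single j.succ 1 - Pi.single k.succ 1) x =
      x 0 + x i.succ + x j.succ + x k.succ := by
  simp only [pair_sub_left, pair_single_zero_left, pair_single_succ_left]; ring

lemma single_succ_mem_orbit_single_succ (i j : Fin r) :
    Pi.single i.succ 1 ∈ orbit (canonicalIsometries r) (Pi.single j.succ 1 : Fin (r + 1) → ℤ) := by
  rcases eq_or_ne i j with rfl | hij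
  · exact mem_orbit_self _
  have hpair := pair_transpositionRoot (i := i) (j := j)
  convert add_pair_smul_mem_orbit (α := Pi.single i.succ 1 - Pi.single j.succ 1) ?_ ?_ _ using 1
  · ext m
    simp [hpair, Pi.single_apply, hij]
  · simp [hpair, hij, hij.symm]
  · simp [hpair, Kc, Fin.succ_ne_zero]

lemma exists_mem_orbit_apply_zero_lt (hij : i ≠ j) (hik : i ≠ k) (hjk : j ≠ k)
    {E : Fin (r + 1) → ℤ} (hE : E 0 + E i.succ + E j.succ + E k.succ < 0) :
    ∃ E' ∈ orbit (canonicalIsometries r) E, E' 0 < E 0 := by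
  have hpair := pair_cremonaRoot (i := i) (j := j) (k := k)
  refine ⟨_, add_pair_smul_mem_orbit
    (α := Pi.single 0 1 - Pi.single i.succ 1 - Pi.single j.succ 1 - Pi.single k.succ 1) ?_ ?_ E, ?_⟩
  · simp [hpair, hij, hik, hjk, hij.symm, hik.symm, hjk.symm, Fin.succ_ne_zero]
  · simp [hpair, Kc, Fin.succ_ne_zero]
  · simp [hpair, Fin.succ_ne_zero]; linarith

end Roots

lemma sq_sum_le_mul_sum_sq {ι R : Type*} [CommRing R] [LinearOrder R] [IsStrictOrderedRing R]
    {s : Finset ι} {n : ℕ} (hs : s.card ≤ n) (f : ι → R) :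
    (∑ i ∈ s, f i) ^ 2 ≤ n * ∑ i ∈ s, f i ^ 2 :=
  sq_sum_le_card_mul_sum_sq.trans <|
    mul_le_mul_of_nonneg_right (by exact_mod_cast hs) (Finset.sum_nonneg fun i _ => sq_nonneg (f i))

lemma noether_inequality {s : ℕ} {c : Fin (s + 3) → ℤ} (hc : Monotone c) (hneg : ∀ i, c i ≤ 0)
    {a : ℤ} (hsum : ∑ i, c i = 1 - 3 * a) (hsq : ∑ i, c i ^ 2 = a ^ 2 + 1) :
    a + c 0 + c 1 + c 2 < 0 := by
  simp only [Fin.sum_univ_succ, Fin.succ_zero_eq_one, Fin.succ_one_eq_two] at hsum hsq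
  set rest := ∑ l : Fin s, c l.succ.succ.succ
  have hrest : ∑ l : Fin s, c l.succ.succ.succ ^ 2 ≤ c 2 * rest := by
    rw [Finset.mul_sum]
    refine Finset.sum_le_sum fun l _ => ?_
    have h2l : c 2 ≤ c l.succ.succ.succ := hc (by simp [Fin.le_iff_val_le_val, Nat.mod_eq_of_lt])
    nlinarith [hneg l.succ.succ.succ]
  have h01 : c 0 ≤ c 1 := hc (Fin.zero_le _)
  have h12 : c 1 ≤ c 2 := hc (by simp [Fin.le_iff_val_le_val, Nat.mod_eq_of_lt])
  have hz := hneg 2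
  -- If `T := a + c 0 + c 1 + c 2 ≥ 0`, the hypotheses give `1 ≤ c 2 * (6 * c 2 + 2 * a + 1)`,
  -- which is impossible as `c 2 ≤ 0` and `3 * c 2 + a ≥ T ≥ 0`.
  by_contra! hT
  nlinarith [mul_nonneg (sub_nonneg.2 (h01.trans h12)) (sub_nonneg.2 h12),
    mul_nonneg hT (by linarith : 0 ≤ a + c 0 + c 1 + c 2 + 2 * (2 * c 2 - c 0 - c 1)),
    mul_nonneg (neg_nonneg.2 hz) hT,
    mul_nonneg (neg_nonneg.2 hz) (by linarith : 0 ≤ 6 * c 2 + 2 * a + 1)]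

namespace Exceptional

variable {E : Fin (r + 1) → ℤ}

lemma sum_sq (hE : Exceptional E) : ∑ i : Fin r, E i.succ ^ 2 = E 0 ^ 2 + 1 := by
  have := hE.1; simp only [pair, ← sq] at this; linarith

lemma sum (hE : Exceptional E) : ∑ i : Fin r, E i.succ = 1 - 3 * E 0 := by
  have := hE.2; simp [pair, Kc, Fin.succ_ne_zero] at this; linarith

lemma apply_zero_nonneg (h8 : r ≤ 8) (hE : Exceptional E) : 0 ≤ E 0 := by
  have hcs := sq_sum_le_mul_sum_sq (s := Finset.univ) (n := 8) (by simpa using h8)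
    (fun i : Fin r => E i.succ)
  have hle : ∑ i : Fin r, E i.succ ≤ ∑ i : Fin r, E i.succ ^ 2 :=
    Finset.sum_le_sum fun i _ => Int.le_self_sq (E i.succ)
  rw [hE.sum, hE.sum_sq] at hcs hle
  push_cast at hcs
  nlinarith

lemma apply_succ_nonpos (h8 : r ≤ 8) (hE : Exceptional E) (ha : 0 < E 0) (j : Fin r) :
    E j.succ ≤ 0 := by
  by_contra! hj
  have hcs := sq_sum_le_mul_sum_sq (s := Finset.univ.erase j) (n := 7)
    (by simp [Finset.card_erase_of_mem]; omega) (fun i : Fin r => E i.succ)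
  have hsum := hE.sum
  have hsq := hE.sum_sq
  rw [← Finset.add_sum_erase _ _ (Finset.mem_univ j)] at hsum hsq
  push_cast at hcs
  nlinarith

lemma eq_single_of_apply_zero_eq_zero (hE : Exceptional E) (h0 : E 0 = 0) :
    ∃ j : Fin r, E = Pi.single j.succ 1 := by
  have hsum := hE.sum
  have hsq := hE.sum_sq
  rw [h0] at hsum hsq
  obtain ⟨j, -, hj⟩ := Finset.exists_ne_zero_of_sum_ne_zero (by rw [hsum]; norm_num)
  rw [← Finset.add_sum_erase _ _ (Finset.mem_univ j)] at hsum hsq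
  have hrest : ∀ i ≠ j, E i.succ = 0 := by
    intro i hi
    have hle : E i.succ ^ 2 ≤ ∑ l ∈ Finset.univ.erase j, E l.succ ^ 2 :=
      Finset.single_le_sum (f := fun l : Fin r => E l.succ ^ 2) (fun l _ => sq_nonneg _)
        (Finset.mem_erase.2 ⟨hi, Finset.mem_univ i⟩)
    have : 0 < E j.succ ^ 2 := by positivity
    nlinarith
  rw [Finset.sum_eq_zero fun i hi => hrest i (Finset.ne_of_mem_erase hi), add_zero] at hsum
  refine ⟨j, funext fun m => Fin.cases ?_ (fun i => ?_) m⟩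
  · simp [h0, (Fin.succ_ne_zero j).symm]
  · rcases eq_or_ne i j with rfl | hi
    · simp [hsum]
    · simp [hrest i hi, hi]

lemma exists_triple_lt_zero (h3 : 3 ≤ r) (h8 : r ≤ 8) (hE : Exceptional E) (ha : 0 < E 0) :
    ∃ i j k : Fin r, i ≠ j ∧ i ≠ k ∧ j ≠ k ∧ E 0 + E i.succ + E j.succ + E k.succ < 0 := by
  obtain ⟨s, rfl⟩ : ∃ s, r = s + 3 := ⟨r - 3, by omega⟩
  set b : Fin (s + 3) → ℤ := fun i => E i.succ
  set σ := Tuple.sort b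
  refine ⟨σ 0, σ 1, σ 2, by simp, by simp [Fin.ext_iff, Nat.mod_eq_of_lt],
    by simp [Fin.ext_iff, Nat.mod_eq_of_lt], ?_⟩
  exact noether_inequality (Tuple.monotone_sort b) (fun i => hE.apply_succ_nonpos h8 ha _)
    ((Equiv.sum_comp σ b).trans hE.sum) ((Equiv.sum_comp σ (fun i => b i ^ 2)).trans hE.sum_sq)

lemma exists_orbit_eq_single (h3 : 3 ≤ r) (h8 : r ≤ 8) (hE : Exceptional E) :
    ∃ j : Fin r, orbit (canonicalIsometries r) E =
      orbit (canonicalIsometries r) (Pi.single j.succ 1 : Fin (r + 1) → ℤ) := by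
  induction hn : (E 0).toNat using Nat.strong_induction_on generalizing E with
  | _ n ih =>
  rcases (hE.apply_zero_nonneg h8).eq_or_lt with h0 | ha
  · obtain ⟨j, rfl⟩ := hE.eq_single_of_apply_zero_eq_zero h0.symm
    exact ⟨j, rfl⟩
  obtain ⟨i, j, k, hij, hik, hjk, hneg⟩ := hE.exists_triple_lt_zero h3 h8 ha
  obtain ⟨_, ⟨g, rfl⟩, hlt⟩ := exists_mem_orbit_apply_zero_lt hij hik hjk hneg
  beta_reduce at hlt
  obtain ⟨l, hl⟩ := ih _ (by omega) (hE.smul g) rfl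
  exact ⟨l, (orbit_smul g E).symm.trans hl⟩

end Exceptional

/-- For `3 ≤ r ≤ 8`, the group of ℤ-linear automorphisms of `Λ_r` preserving
the pairing and fixing `K_r` acts transitively on the exceptional classes. -/
theorem weyl_transitive_on_exceptional (r : ℕ) (h3 : 3 ≤ r) (h8 : r ≤ 8)
    (E E' : Fin (r + 1) → ℤ) (hE : Exceptional E) (hE' : Exceptional E') :
    ∃ g : (Fin (r + 1) → ℤ) ≃ₗ[ℤ] (Fin (r + 1) → ℤ),
      (∀ x y, pair (g x) (g y) = pair x y) ∧ g (Kc r) = Kc r ∧ g E = E' := by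
  obtain ⟨i, hi⟩ := hE.exists_orbit_eq_single h3 h8
  obtain ⟨j, hj⟩ := hE'.exists_orbit_eq_single h3 h8
  have hE'E : E' ∈ orbit (canonicalIsometries r) E := by
    rw [← orbit_eq_iff, hi, hj, orbit_eq_iff]
    exact single_succ_mem_orbit_single_succ j i
  obtain ⟨⟨g, horth, hK⟩, rfl⟩ := hE'E
  exact ⟨g, fun x y => by simpa using horth x y, hK, rfl⟩
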